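/- Let G be a finite digraph, let M = (G,𝐑,π) be a Moser–Tardos tuple in which π is the partition of V(G) into singletons, let Δ := maxdeg(Rel(G)) ≥ 1 and d := max_{x∈V(G)} |Var(x)|. Suppose δ > 0 satisfies max_{x∈V(G)} |𝐑^c(x)|/b^{|Var(x)|} ≤ 1/(eΔ)^{1+δ}. Then for every independence function on Rel(G), every total order on V(G), and all m,k ∈ ℕ: Pr_rnd( |V(L^k_{M,rnd})| = m ) ≤ d·|V(G)|·(m+1)^{|V(G)|}/(eΔ)^{δm}. -/

import Mathlib

open MeasureTheory
open scoped Classical ENNReal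

namespace MTLLL

variable {V : Type*} {ι : Type*}

/-- The out-neighbourhood `Var(x)` of a vertex `x` in the digraph with edge relation `E`. -/
def Var (E : V → V → Prop) (x : V) : Set V := {y | E x y}

/-- The in-neighbourhood `Cl(x)`. -/
def Cl (E : V → V → Prop) (x : V) : Set V := {y | E y x}

/-- The neighbourhood `N(x) = Var(x) ∪ Cl(x)`. -/
def Nbr (E : V → V → Prop) (x : V) : Set V := Var E x ∪ Cl E x

/-- The maximal vertex degree of a digraph, as an extended natural number. -/
noncomputable def maxdeg (E : V → V → Prop) : ℕ∞ := ⨆ x : V, (Nbr E x).encard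

/-- The digraph `Rel(G)`: edges join vertices whose out-neighbourhoods intersect. -/
def Rel (E : V → V → Prop) (x y : V) : Prop := (Var E x ∩ Var E y).Nonempty

/-- A set is independent in a digraph if no edge other than a self-loop joins two of its
elements. -/
def Indep (E : V → V → Prop) (I : Set V) : Prop :=
  ∀ x ∈ I, ∀ y ∈ I, x ≠ y → ¬ E x y

/-- `I` is a maximal independent subset of `X`. -/
def MaxIndepIn (E : V → V → Prop) (X I : Set V) : Prop :=
  I ⊆ X ∧ Indep E I ∧ ∀ J : Set V, I ⊆ J → J ⊆ X → Indep E J → J = I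

/-- A local rule: for each vertex `x` a set of colourings of `Var(x)` by `b` colours,
imposing no restriction when `Var(x)` is empty. -/
structure LocalRule (E : V → V → Prop) (b : ℕ) where
  R : ∀ x : V, Set (Var E x → Fin b)
  isFull_of_empty : ∀ x : V, Var E x = ∅ → R x = Set.univ

/-- The complement rule `𝐑ᶜ(x)`. -/
def LocalRule.Rc {E : V → V → Prop} {b : ℕ} (R : LocalRule E b) (x : V) :
    Set (Var E x → Fin b) := (R.R x)ᶜ

/-- A colouring satisfies the rule if at every vertex its restriction to `Var(x)` obeys
`𝐑(x)`. -/
def Satisfies (E : V → V → Prop) {b : ℕ} (R : LocalRule E b) (f : V → Fin b) : Prop :=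
  ∀ x : V, (fun y : Var E x => f y.1) ∈ R.R x

/-- The bad set `B(f)` of clauses violated by `f`. -/
def bad (E : V → V → Prop) {b : ℕ} (R : LocalRule E b) (f : V → Fin b) : Set V :=
  {x : V | (fun y : Var E x => f y.1) ∈ R.Rc x}

/-- The symmetrisation of the digraph, with loops removed, as a simple graph;
it is used to measure graph distances. -/
def toSG (E : V → V → Prop) : SimpleGraph V where
  Adj x y := x ≠ y ∧ (E x y ∨ E y x)
  symm := ⟨fun x y h => ⟨Ne.symm h.1, h.2.symm⟩⟩
  loopless := ⟨fun x h => h.1 rfl⟩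

/-- The ball of radius `r` around `x` in graph distance (ignoring orientations). -/
def ball (E : V → V → Prop) (x : V) (r : ℕ) : Set V :=
  {y | ∃ p : (toSG E).Walk x y, p.length ≤ r}

/-- The class `subexp(R,ε,d)`: max degree at most `d` and balls of radius `3R` of size at
most `(1+ε)^R`. -/
def Subexp (E : V → V → Prop) (Rad d : ℕ) (ε : ℝ) : Prop :=
  maxdeg E ≤ (d : ℕ∞) ∧
  ∀ x : V, (ball E x (3 * Rad)).Finite ∧ ((ball E x (3 * Rad)).ncard : ℝ) ≤ (1 + ε) ^ Rad

/-- A partition (encoded by the map sending a vertex to its part) is `r`-sparse if distinct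
vertices in the same part are at graph distance greater than `2r`. -/
def Sparse (E : V → V → Prop) (part : V → ι) (r : ℕ) : Prop :=
  ∀ x y : V, part x = part y → x ≠ y → y ∉ ball E x (2 * r)

/-- An independence function: `I X` is always a maximal independent subset of `X`. -/
def IndepFun (E : V → V → Prop) (I : Set V → Set V) : Prop :=
  ∀ X : Set V, MaxIndepIn E X (I X)

/-- `Var` of a set of vertices. -/
def VarSet (E : V → V → Prop) (A : Set V) : Set V := ⋃ x ∈ A, Var E x

/-- One run of the Moser–Tardos algorithm: `(mtAux j).1 = MT^j` and `(mtAux j).2 = h^{j+1}`. -/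
noncomputable def mtAux (E : V → V → Prop) {b : ℕ} (R : LocalRule E b)
    (part : V → ι) (I : Set V → Set V) (rnd : ι × ℕ → Fin b) :
    ℕ → (V → Fin b) × (V → ℕ)
  | 0 => (fun x => rnd (part x, 0), fun _ => 1)
  | j + 1 =>
    let p := mtAux E R part I rnd j
    (fun x => if x ∈ VarSet E (I (bad E R p.1)) then rnd (part x, p.2 x) else p.1 x,
     fun x => if x ∈ VarSet E (I (bad E R p.1)) then p.2 x + 1 else p.2 x)

/-- The colouring `MT^j` produced by the Moser–Tardos algorithm. -/
noncomputable def MT (E : V → V → Prop) {b : ℕ} (R : LocalRule E b)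
    (part : V → ι) (I : Set V → Set V) (rnd : ι × ℕ → Fin b) (j : ℕ) : V → Fin b :=
  (mtAux E R part I rnd j).1

/-- The resampling counters `h^k`. -/
noncomputable def hres (E : V → V → Prop) {b : ℕ} (R : LocalRule E b)
    (part : V → ι) (I : Set V → Set V) (rnd : ι × ℕ → Fin b) : ℕ → V → ℕ
  | 0 => fun _ => 0
  | j + 1 => (mtAux E R part I rnd j).2

/-- The total number `h^∞(x)` of resamplings at `x`. -/
noncomputable def hinf (E : V → V → Prop) {b : ℕ} (R : LocalRule E b)
    (part : V → ι) (I : Set V → Set V) (rnd : ι × ℕ → Fin b) (x : V) : ℕ∞ :=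
  ⨆ k : ℕ, (hres E R part I rnd k x : ℕ∞)

/-- `μ` is the product over `ι × ℕ` of uniform measures on `Fin b`: it is a probability
measure giving each cylinder set its natural measure. -/
def IsUnifProduct {ι : Type*} (b : ℕ) (μ : Measure ((ι × ℕ) → Fin b)) : Prop :=
  IsProbabilityMeasure μ ∧
  ∀ (s : Finset (ι × ℕ)) (g : (ι × ℕ) → Fin b),
    μ {rnd | ∀ p ∈ s, rnd p = g p} = (1 / (b : ℝ≥0∞)) ^ s.card

end MTLLL
namespace MTLLL

variable {V : Type*} {ι : Type*}

/-- A `G`-forest: a subdigraph of `Canvas(G)` (vertices `V × ℕ`, edges going up one level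
between `Rel`-adjacent vertices) in which every vertex has in-degree `0` or `1`. -/
structure GForest (E : V → V → Prop) where
  verts : Set (V × ℕ)
  edges : V × ℕ → V × ℕ → Prop
  edges_mem_left : ∀ a c : V × ℕ, edges a c → a ∈ verts
  edges_mem_right : ∀ a c : V × ℕ, edges a c → c ∈ verts
  edges_rel : ∀ a c : V × ℕ, edges a c → Rel E a.1 c.1
  edges_level : ∀ a c : V × ℕ, edges a c → c.2 = a.2 + 1
  indeg_le_one : ∀ c a a' : V × ℕ, edges a c → edges a' c → a = a'

/-- A forest is grounded if every root (in-degree `0` vertex) has level `0`. -/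
def GForest.Grounded {E : V → V → Prop} (F : GForest E) : Prop :=
  ∀ a ∈ F.verts, (∀ a' : V × ℕ, ¬ F.edges a' a) → a.2 = 0

/-- A forest has finite height if its levels are bounded. -/
def GForest.FinHeight {E : V → V → Prop} (F : GForest E) : Prop :=
  ∃ j : ℕ, ∀ a ∈ F.verts, a.2 < j

/-- A forest is independent if each of its level sets is independent in `Rel(G)`. -/
def GForest.LevelIndep {E : V → V → Prop} (F : GForest E) : Prop :=
  ∀ i : ℕ, Indep (Rel E) {x : V | (x, i) ∈ F.verts}

/-- `varcount(F) = |V(G)| + Σ_{(x,i) ∈ V(F)} |Var(x)|`. -/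
noncomputable def GForest.varcount {E : V → V → Prop} (F : GForest E) : ℕ :=
  Nat.card V + ∑ᶠ a ∈ F.verts, (Var E (Prod.fst a)).ncard

/-- The set of roots of airborne trees (trees whose root has positive level). -/
def airborneRoots {E : V → V → Prop} (F : GForest E) : Set (V × ℕ) :=
  {a ∈ F.verts | (∀ a' : V × ℕ, ¬ F.edges a' a) ∧ 0 < a.2}

/-- A finalised `M`-landscape: an independent `G`-forest of finite height together with a
violation datum `vio (x,i) ∈ 𝐑ᶜ(x)` at each of its vertices, and a final colouring. -/
structure FinLandscape (E : V → V → Prop) (b : ℕ) (R : LocalRule E b) where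
  F : GForest E
  levelIndep : F.LevelIndep
  finHeight : F.FinHeight
  vio : ∀ a : F.verts, Var E (a : V × ℕ).1 → Fin b
  vio_not_mem : ∀ a : F.verts, vio a ∈ R.Rc (a : V × ℕ).1
  fin : V → Fin b

/-- The sequence `Used_L(x)`: the values `vio(y,s)(x)` over the (at most one per level)
vertices `(y,s)` of the forest with `x ∈ Var(y)`, in increasing order of level, followed by
the final value `fin x`. -/
noncomputable def FinLandscape.Used {E : V → V → Prop} {b : ℕ} {R : LocalRule E b}
    (L : FinLandscape E b R) (x : V) : List (Fin b) :=
  ((List.range (Nat.find L.finHeight)).filterMap fun i =>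
    if h : ∃ y : V, ∃ _ : (y, i) ∈ L.F.verts, x ∈ Var E y then
      some (L.vio ⟨(h.choose, i), h.choose_spec.choose⟩ ⟨x, h.choose_spec.choose_spec⟩)
    else none) ++ [L.fin x]

/-- The finalised landscape `L^k` associated to a run of the Moser–Tardos algorithm
(relative to a linear order used to pick parents in the forest). -/
noncomputable def runLandscape (E : V → V → Prop) {b : ℕ} (R : LocalRule E b)
    (part : V → ι) {I : Set V → Set V} (hI : IndepFun (Rel E) I)
    (rnd : ι × ℕ → Fin b) (lo : LinearOrder V) (k : ℕ) :
    FinLandscape E b R where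
  F :=
    { verts := {a : V × ℕ | a.2 < k ∧ a.1 ∈ I (bad E R (MT E R part I rnd a.2))}
      edges := fun a c =>
        (c.2 < k ∧ c.1 ∈ I (bad E R (MT E R part I rnd c.2))) ∧ c.2 = a.2 + 1 ∧
        (a.1 ∈ I (bad E R (MT E R part I rnd a.2)) ∧ (Var E a.1 ∩ Var E c.1).Nonempty) ∧
        ∀ z : V, z ∈ I (bad E R (MT E R part I rnd a.2)) →
          (Var E z ∩ Var E c.1).Nonempty → lo.le a.1 z
      edges_mem_left := by
        rintro a c ⟨⟨hck, -⟩, hlev, ⟨haI, -⟩, -⟩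
        exact ⟨by omega, haI⟩
      edges_mem_right := fun a c h => h.1
      edges_rel := fun a c h => h.2.2.1.2
      edges_level := fun a c h => h.2.1
      indeg_le_one := by
        rintro c a a' ⟨-, hlev, ⟨haI, haV⟩, hmin⟩ ⟨-, hlev', ⟨haI', haV'⟩, hmin'⟩
        have h2 : a.2 = a'.2 := by omega
        rw [h2] at haI hmin
        have h1 : a.1 = a'.1 := lo.le_antisymm _ _ (hmin _ haI' haV') (hmin' _ haI haV)
        exact Prod.ext h1 h2 }
  levelIndep := by
    intro i x hx y hy hxy
    exact (hI (bad E R (MT E R part I rnd i))).2.1 x hx.2 y hy.2 hxy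
  finHeight := ⟨k, fun a ha => ha.1⟩
  vio := fun a => fun y => MT E R part I rnd (a : V × ℕ).2 y.1
  vio_not_mem := fun a => (hI (bad E R (MT E R part I rnd (a : V × ℕ).2))).1 a.2.2
  fin := MT E R part I rnd k

end MTLLL

/-!
With the singleton partition, the value of variable `x` after `j` steps is the coordinate
`rnd (x, h)`, where `h` counts the levels below `j` of the run landscape containing a clause on
`x`. So, for a fixed level-independent vertex set `S`, the event that the landscape has vertex set
`S` asks disjoint blocks of coordinates of `rnd` to take violating values: its probability is at
most `∏ |𝐑ᶜ(x)| / b ^ |Var(x)| ≤ (eΔ) ^ (-(1 + δ) m)`. The vertex set is moreover grounded: a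
clause picked at level `i + 1` shares a variable with one picked at level `i`. A grounded set of
size `m` is determined by its level-`0` part and, for every other vertex, the position of a parent
and the slot of the vertex among the at most `Δ` neighbours of that parent, so there are at most
`2 ^ |V| ∑_{j ≤ m} C(mΔ, j) ≤ 2 ^ |V| (eΔ) ^ m` of them, and a union bound concludes.
-/

namespace MTLLL

open Finset

variable {V : Type*}

section UniformProduct

variable {ι : Type*} {b : ℕ} {μ : Measure ((ι × ℕ) → Fin b)}

theorem IsUnifProduct.measure_cylinder_le (hμ : IsUnifProduct b μ) {K : Type*} [Fintype K]
    {c : K → ι × ℕ} (hc : c.Injective) (w : K → Fin b) :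
    μ {rnd | ∀ k, rnd (c k) = w k} ≤ (1 / (b : ℝ≥0∞)) ^ Fintype.card K := by
  rcases Set.eq_empty_or_nonempty {rnd : (ι × ℕ) → Fin b | ∀ k, rnd (c k) = w k} with h | ⟨rnd₀, h₀⟩
  · simp [h]
  have hcyl : {rnd : (ι × ℕ) → Fin b | ∀ k, rnd (c k) = w k}
      = {rnd | ∀ p ∈ Finset.univ.map ⟨c, hc⟩, rnd p = rnd₀ p} := by
    ext rnd
    simp_all
  rw [hcyl, hμ.2, Finset.card_map, Finset.card_univ]

theorem IsUnifProduct.measure_forall_block_mem_le (hμ : IsUnifProduct b μ) {κ : Type*}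
    [Fintype κ] {X : κ → Type*} [∀ i, Fintype (X i)] {c : (Σ i, X i) → ι × ℕ}
    (hc : c.Injective) (A : ∀ i, Set (X i → Fin b)) :
    μ {rnd | ∀ i, (fun x => rnd (c ⟨i, x⟩)) ∈ A i}
      ≤ ∏ i, (Nat.card (A i) : ℝ≥0∞) * (1 / (b : ℝ≥0∞)) ^ Fintype.card (X i) := by
  have hcover : {rnd : (ι × ℕ) → Fin b | ∀ i, (fun x => rnd (c ⟨i, x⟩)) ∈ A i}
      ⊆ ⋃ v : (∀ i, A i), {rnd | ∀ k : Σ i, X i, rnd (c k) = (v k.1).1 k.2} := by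
    intro rnd hrnd
    exact Set.mem_iUnion.2 ⟨fun i => ⟨_, hrnd i⟩, fun k => rfl⟩
  calc μ {rnd | ∀ i, (fun x => rnd (c ⟨i, x⟩)) ∈ A i}
      ≤ ∑ v : (∀ i, A i), μ {rnd | ∀ k : Σ i, X i, rnd (c k) = (v k.1).1 k.2} :=
        (measure_mono hcover).trans (measure_iUnion_fintype_le _ _)
    _ ≤ ∑ _v : (∀ i, A i), (1 / (b : ℝ≥0∞)) ^ Fintype.card (Σ i, X i) :=
        Finset.sum_le_sum fun v _ => hμ.measure_cylinder_le hc _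
    _ = ∏ i, (Nat.card (A i) : ℝ≥0∞) * (1 / (b : ℝ≥0∞)) ^ Fintype.card (X i) := by
        rw [Finset.sum_const, Finset.card_univ, Fintype.card_pi, Fintype.card_sigma,
          ← Finset.prod_pow_eq_pow_sum, nsmul_eq_mul, Finset.prod_mul_distrib]
        simp [Nat.card_eq_fintype_card]

end UniformProduct

theorem MaxIndepIn.mem_of_forall_not_rel {r : V → V → Prop} {X I : Set V} (h : MaxIndepIn r X I)
    {x : V} (hx : x ∈ X) (hxI : ∀ z ∈ I, ¬ r z x ∧ ¬ r x z) : x ∈ I := by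
  have hindep : Indep r (insert x I) := by
    rintro u (rfl | hu) v (rfl | hv) huv
    · exact absurd rfl huv
    · exact (hxI v hv).2
    · exact (hxI u hu).1
    · exact h.2.1 u hu v hv huv
  rw [← h.2.2 _ (Set.subset_insert x I) (Set.insert_subset hx h.1) hindep]
  exact Set.mem_insert x I

theorem Rel.symm {E : V → V → Prop} {x y : V} (h : Rel E x y) : Rel E y x := by
  rw [Rel, Set.inter_comm]
  exact h

section Run

variable {ι : Type*} (E : V → V → Prop) {b : ℕ} (R : LocalRule E b) (part : V → ι)
  (I : Set V → Set V) (rnd : ι × ℕ → Fin b)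

theorem var_nonempty_of_mem_bad {f : V → Fin b} {x : V} (hx : x ∈ bad E R f) :
    (Var E x).Nonempty := by
  by_contra hempty
  rw [Set.not_nonempty_iff_eq_empty] at hempty
  simp [bad, LocalRule.Rc, R.isFull_of_empty x hempty] at hx

theorem MT_succ_of_notMem {j : ℕ} {x : V}
    (hx : x ∉ VarSet E (I (bad E R (MT E R part I rnd j)))) :
    MT E R part I rnd (j + 1) x = MT E R part I rnd j x :=
  if_neg hx

/-- A clause picked at step `j + 1` that shares no variable with the clauses picked at step `j`
was already violated at step `j`, so maximality would have picked it then. -/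
theorem exists_rel_of_mem_succ (hI : IndepFun (Rel E) I) {j : ℕ} {x : V}
    (hx : x ∈ I (bad E R (MT E R part I rnd (j + 1)))) :
    ∃ z ∈ I (bad E R (MT E R part I rnd j)), Rel E z x := by
  by_contra! hno
  have hunchanged : ∀ y ∈ Var E x, MT E R part I rnd (j + 1) y = MT E R part I rnd j y := by
    refine fun y hy => MT_succ_of_notMem E R part I rnd fun hy' => ?_
    obtain ⟨z, hz, hyz⟩ := Set.mem_iUnion₂.1 hy'
    exact hno z hz ⟨y, hyz, hy⟩
  have hbad : x ∈ bad E R (MT E R part I rnd j) := by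
    have hx' := (hI _).1 hx
    simp only [bad, Set.mem_ofPred_eq] at hx' ⊢
    convert hx' using 2 with y
    exact (hunchanged y y.2).symm
  have hxI := (hI _).mem_of_forall_not_rel hbad fun z hz => ⟨hno z hz, fun h => hno z hz h.symm⟩
  obtain ⟨y, hy⟩ := var_nonempty_of_mem_bad E R hbad
  exact hno x hxI ⟨y, hy, hy⟩

/-- `(runLandscape E R id hI rnd lo k).F.verts`, unfolded. -/
def runVerts (k : ℕ) (rnd : V × ℕ → Fin b) : Set (V × ℕ) :=
  {a | a.2 < k ∧ a.1 ∈ I (bad E R (MT E R id I rnd a.2))}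

noncomputable def coverCount (S : Set (V × ℕ)) (j : ℕ) (x : V) : ℕ :=
  #{i ∈ range j | ∃ y, (y, i) ∈ S ∧ x ∈ Var E y}

theorem coverCount_succ (S : Set (V × ℕ)) (j : ℕ) (x : V) :
    coverCount E S (j + 1) x
      = coverCount E S j x + if ∃ y, (y, j) ∈ S ∧ x ∈ Var E y then 1 else 0 := by
  unfold coverCount
  rw [range_add_one, filter_insert]
  split_ifs with h
  · rw [card_insert_of_notMem (by simp)]
  · rfl

theorem coverCount_lt_coverCount {S : Set (V × ℕ)} {i i' : ℕ} (hii' : i < i') {y x : V}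
    (hy : (y, i) ∈ S) (hx : x ∈ Var E y) : coverCount E S i x < coverCount E S i' x := by
  refine card_lt_card ⟨filter_subset_filter _ (range_subset_range.2 hii'.le), fun hsub => ?_⟩
  have := hsub (mem_filter.2 ⟨mem_range.2 hii', y, hy, hx⟩)
  simp at this

/-- The resamplings of `x` before step `j` are counted by the landscape levels covering `x`. -/
theorem mtAux_id_eq {k j : ℕ} (hj : j ≤ k) (rnd : V × ℕ → Fin b) :
    mtAux E R id I rnd j
      = (fun x => rnd (x, coverCount E (runVerts E R I k rnd) j x),
         fun x => coverCount E (runVerts E R I k rnd) j x + 1) := by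
  induction j with
  | zero => simp [mtAux, coverCount]
  | succ j ih =>
    have hcover : ∀ x, x ∈ VarSet E (I (bad E R (MT E R id I rnd j)))
        ↔ ∃ y, (y, j) ∈ runVerts E R I k rnd ∧ x ∈ Var E y := by
      simp [VarSet, runVerts, show j < k by omega]
    have ih' := ih (by omega)
    simp only [mtAux, MT, ih'] at hcover ⊢
    ext x <;> simp only [hcover, coverCount_succ] <;> split_ifs <;> simp [add_comm]

theorem MT_id_eq {k j : ℕ} (hj : j ≤ k) (rnd : V × ℕ → Fin b) (x : V) :
    MT E R id I rnd j x = rnd (x, coverCount E (runVerts E R I k rnd) j x) := by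
  rw [MT, mtAux_id_eq E R I hj]

end Run

section RunLandscape

variable (E : V → V → Prop) {b : ℕ} (R : LocalRule E b) (I : Set V → Set V)

theorem not_rel_of_mem_runVerts (hI : IndepFun (Rel E) I) {k : ℕ} {rnd : V × ℕ → Fin b}
    {a a' : V × ℕ} (ha : a ∈ runVerts E R I k rnd) (ha' : a' ∈ runVerts E R I k rnd)
    (hlevel : a.2 = a'.2) (hne : a ≠ a') : ¬ Rel E a.1 a'.1 := by
  refine (hI _).2.1 a.1 ha.2 a'.1 (hlevel ▸ ha'.2) fun h => hne (Prod.ext h hlevel)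

theorem exists_rel_of_mem_runVerts (hI : IndepFun (Rel E) I) {k : ℕ} {rnd : V × ℕ → Fin b}
    {y : V} {i : ℕ} (hy : (y, i + 1) ∈ runVerts E R I k rnd) :
    ∃ z, (z, i) ∈ runVerts E R I k rnd ∧ Rel E z y := by
  obtain ⟨z, hz, hrel⟩ := exists_rel_of_mem_succ E R id I rnd hI hy.2
  exact ⟨z, ⟨by have := hy.1; simp only at this ⊢; omega, hz⟩, hrel⟩

theorem coverCoord_injective {S : Finset (V × ℕ)}
    (hS : ∀ a ∈ S, ∀ a' ∈ S, a.2 = a'.2 → a ≠ a' → ¬ Rel E a.1 a'.1) :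
    Function.Injective fun p : Σ a : S, Var E (a : V × ℕ).1 =>
      (p.2.1, coverCount E (S : Set (V × ℕ)) (p.1 : V × ℕ).2 p.2.1) := by
  rintro ⟨⟨a, ha⟩, x, hx⟩ ⟨⟨a', ha'⟩, x', hx'⟩ h
  simp only [Prod.mk.injEq] at h
  obtain ⟨rfl, hcount⟩ := h
  have hlevel : a.2 = a'.2 := by
    by_contra hne
    rcases Nat.lt_or_gt_of_ne hne with hlt | hlt
    · exact (coverCount_lt_coverCount E hlt (mem_coe.2 ha) hx).ne hcount
    · exact (coverCount_lt_coverCount E hlt (mem_coe.2 ha') hx').ne hcount.symm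
  obtain rfl : a = a' := by
    by_contra hne
    exact hS a ha a' ha' hlevel hne ⟨x, hx, hx'⟩
  rfl

theorem measure_runVerts_eq_le [Fintype V] {μ : Measure ((V × ℕ) → Fin b)}
    (hμ : IsUnifProduct b μ) (hI : IndepFun (Rel E) I) (k : ℕ) (S : Finset (V × ℕ)) :
    μ {rnd | runVerts E R I k rnd = S}
      ≤ ∏ a ∈ S, (Nat.card (R.Rc a.1) : ℝ≥0∞) * (1 / (b : ℝ≥0∞)) ^ (Var E a.1).ncard := by
  rcases Set.eq_empty_or_nonempty {rnd | runVerts E R I k rnd = S} with hempty | ⟨rnd₀, h₀⟩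
  · simp [hempty]
  have hS : ∀ a ∈ S, ∀ a' ∈ S, a.2 = a'.2 → a ≠ a' → ¬ Rel E a.1 a'.1 := by
    simp only [Set.mem_ofPred_eq] at h₀
    intro a ha a' ha'
    exact not_rel_of_mem_runVerts E R I hI (h₀ ▸ mem_coe.2 ha) (h₀ ▸ mem_coe.2 ha')
  have hviolated : {rnd | runVerts E R I k rnd = S} ⊆ {rnd | ∀ a : S,
      (fun x : Var E (a : V × ℕ).1 => rnd (x, coverCount E (S : Set (V × ℕ)) (a : V × ℕ).2 x))
        ∈ R.Rc (a : V × ℕ).1} := by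
    intro rnd hrnd a
    simp only [Set.mem_ofPred_eq] at hrnd
    have ha : (a : V × ℕ) ∈ runVerts E R I k rnd := hrnd ▸ a.2
    have := (hI _).1 ha.2
    simp only [bad, Set.mem_ofPred_eq, MT_id_eq E R I ha.1.le, hrnd] at this
    exact this
  calc μ {rnd | runVerts E R I k rnd = S}
      ≤ ∏ a : S, (Nat.card (R.Rc (a : V × ℕ).1) : ℝ≥0∞)
          * (1 / (b : ℝ≥0∞)) ^ Fintype.card (Var E (a : V × ℕ).1) :=
        (measure_mono hviolated).trans
          (hμ.measure_forall_block_mem_le (coverCoord_injective E hS) _)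
    _ = ∏ a ∈ S, (Nat.card (R.Rc a.1) : ℝ≥0∞) * (1 / (b : ℝ≥0∞)) ^ (Var E a.1).ncard := by
        rw [← prod_coe_sort S]
        simp only [Fintype.card_eq_nat_card, Nat.card_coe_set_eq]

end RunLandscape

section Grounded

variable (r : V → V → Prop)

def IsGrounded (S : Finset (V × ℕ)) : Prop :=
  ∀ y i, (y, i + 1) ∈ S → ∃ z, (z, i) ∈ S ∧ r z y

variable {r}

theorem IsGrounded.exists_mem_of_le {S : Finset (V × ℕ)} (hS : IsGrounded r S) {y : V} {i j : ℕ}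
    (hy : (y, i) ∈ S) (hji : j ≤ i) : ∃ z, (z, j) ∈ S := by
  induction i generalizing y with
  | zero => exact ⟨y, Nat.le_zero.1 hji ▸ hy⟩
  | succ i ih =>
    rcases hji.eq_or_lt with rfl | hlt
    · exact ⟨y, hy⟩
    · obtain ⟨z, hz, -⟩ := hS y i hy
      exact ih hz (by omega)

theorem IsGrounded.snd_lt_card {S : Finset (V × ℕ)} (hS : IsGrounded r S) {a : V × ℕ}
    (ha : a ∈ S) : a.2 < #S := by
  have : Nonempty V := ⟨a.1⟩
  choose! below hbelow using fun j (hj : j ∈ range (a.2 + 1)) =>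
    hS.exists_mem_of_le ha (Nat.lt_succ_iff.1 (mem_range.1 hj))
  have hinj : Set.InjOn (fun j => (below j, j)) (range (a.2 + 1)) :=
    fun j _ j' _ h => congrArg Prod.snd h
  simpa using card_le_card_of_injOn _ (fun j hj => hbelow j hj) hinj

variable (r)

noncomputable def groundedSets [Fintype V] (m : ℕ) : Finset (Finset (V × ℕ)) :=
  {S ∈ (univ ×ˢ range m).powerset | #S = m ∧ IsGrounded r S}

theorem mem_groundedSets [Fintype V] {m : ℕ} {S : Finset (V × ℕ)} :
    S ∈ groundedSets r m ↔ #S = m ∧ IsGrounded r S := by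
  refine ⟨fun h => (mem_filter.1 h).2, fun h => mem_filter.2 ⟨mem_powerset.2 fun a ha => ?_, h⟩⟩
  simpa [h.1] using h.2.snd_lt_card ha

end Grounded

section Rank

variable {α β : Type*} [LinearOrder β] {f : α → β}

theorem card_filter_lt_lt_card_filter_lt {s : Finset α} {a a' : α} (ha : a ∈ s)
    (h : f a < f a') : #{c ∈ s | f c < f a} < #{c ∈ s | f c < f a'} :=
  card_lt_card ⟨fun _ hc => mem_filter.2 ⟨(mem_filter.1 hc).1, (mem_filter.1 hc).2.trans h⟩,
    fun hsub => (mem_filter.1 (hsub (mem_filter.2 ⟨ha, h⟩))).2.false⟩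

theorem card_filter_lt_lt_card {s : Finset α} {a : α} (ha : a ∈ s) : #{c ∈ s | f c < f a} < #s :=
  card_lt_card ⟨filter_subset _ _, fun hsub => (mem_filter.1 (hsub ha)).2.false⟩

theorem card_filter_lt_injOn (hf : f.Injective) (s : Finset α) :
    Set.InjOn (fun a => #{c ∈ s | f c < f a}) s := by
  intro a ha a' ha' h
  by_contra hne
  rcases lt_or_gt_of_ne (hf.ne hne) with hlt | hlt
  · exact (card_filter_lt_lt_card_filter_lt ha hlt).ne h
  · exact (card_filter_lt_lt_card_filter_lt ha' hlt).ne h.symm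

end Rank

section Encoding

/-- The level comes first, so that the rank of a vertex in a set depends only on the levels of
the set up to its own (`lexRank_congr`). -/
def lexKey (a : V × ℕ) : ℕ ×ₗ V := toLex (a.2, a.1)

theorem lexKey_injective : (lexKey (V := V)).Injective := fun a a' h => by
  simpa [lexKey, Prod.ext_iff, and_comm] using h

variable [LinearOrder V] (r : V → V → Prop)

noncomputable def lexRank (S : Finset (V × ℕ)) (a : V × ℕ) : ℕ := #{c ∈ S | lexKey c < lexKey a}

theorem lexRank_congr {S S' : Finset (V × ℕ)} {i : ℕ}
    (hlow : ∀ c : V × ℕ, c.2 ≤ i → (c ∈ S ↔ c ∈ S'))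
    {a : V × ℕ} (ha : a.2 ≤ i) : lexRank S a = lexRank S' a := by
  unfold lexRank
  congr 1
  ext c
  simp only [mem_filter, and_congr_left_iff, lexKey, Prod.Lex.toLex_lt_toLex]
  intro hlt
  exact hlow c (by rcases hlt with h | ⟨h, -⟩ <;> omega)

variable [Fintype V]

noncomputable def successorRank (z y : V) : ℕ := #{y' ∈ ({y' | r z y'} : Finset V) | y' < y}

noncomputable def parent (S : Finset (V × ℕ)) (a : V × ℕ) : V :=
  if h : ∃ z, (z, a.2 - 1) ∈ S ∧ r z a.1 then h.choose else a.1

theorem parent_spec {S : Finset (V × ℕ)} (hS : IsGrounded r S) {y : V} {i : ℕ}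
    (hy : (y, i + 1) ∈ S) : (parent r S (y, i + 1), i) ∈ S ∧ r (parent r S (y, i + 1)) y := by
  have h : ∃ z, (z, (y, i + 1).2 - 1) ∈ S ∧ r z (y, i + 1).1 := hS y i hy
  rw [parent, dif_pos h]
  exact h.choose_spec

noncomputable def childCode (S : Finset (V × ℕ)) : Finset (ℕ × ℕ) :=
  {a ∈ S | a.2 ≠ 0}.image fun a =>
    (lexRank S (parent r S a, a.2 - 1), successorRank r (parent r S a) a.1)

noncomputable def roots (S : Finset (V × ℕ)) : Finset V := {a ∈ S | a.2 = 0}.image Prod.fst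

variable {r}

theorem mem_of_childCode_eq {S S' : Finset (V × ℕ)} (hS : IsGrounded r S) (hS' : IsGrounded r S')
    (hcode : childCode r S = childCode r S') {i : ℕ}
    (hlow : ∀ c : V × ℕ, c.2 ≤ i → (c ∈ S ↔ c ∈ S')) {y : V} (hy : (y, i + 1) ∈ S) :
    (y, i + 1) ∈ S' := by
  set z := parent r S (y, i + 1)
  obtain ⟨hzS, hzy⟩ := parent_spec r hS hy
  have hcodeS : (lexRank S (z, i), successorRank r z y) ∈ childCode r S' := by
    rw [← hcode]
    exact mem_image_of_mem _ (mem_filter.2 ⟨hy, by simp⟩)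
  obtain ⟨⟨y', i'⟩, ha', heq⟩ := mem_image.1 hcodeS
  obtain ⟨hy'S', hi'⟩ := mem_filter.1 ha'
  obtain ⟨i', rfl⟩ := Nat.exists_eq_add_one_of_ne_zero hi'
  obtain ⟨hz'S', hz'y'⟩ := parent_spec r hS' hy'S'
  simp only [Prod.mk.injEq, add_tsub_cancel_right] at heq
  have hparent : (parent r S' (y', i' + 1), i') = (z, i) := by
    refine card_filter_lt_injOn lexKey_injective S' hz'S' ((hlow _ le_rfl).1 hzS) ?_
    exact heq.1.trans (lexRank_congr hlow le_rfl)
  simp only [Prod.mk.injEq] at hparent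
  obtain ⟨hz, rfl⟩ := hparent
  rw [hz] at heq hz'y'
  have hy' : y' = y := card_filter_lt_injOn (f := id) (fun _ _ h => h) _
    (by simpa using hz'y') (by simpa using hzy) heq.2
  exact hy' ▸ hy'S'

theorem eq_of_roots_eq_of_childCode_eq {S S' : Finset (V × ℕ)} (hS : IsGrounded r S)
    (hS' : IsGrounded r S') (hroots : roots S = roots S') (hcode : childCode r S = childCode r S') :
    S = S' := by
  have hlow : ∀ i, ∀ c : V × ℕ, c.2 ≤ i → (c ∈ S ↔ c ∈ S') := by
    intro i
    induction i with
    | zero =>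
      rintro ⟨y, i⟩ (hi : i ≤ 0)
      obtain rfl := Nat.le_zero.1 hi
      have hmem : ∀ T : Finset (V × ℕ), y ∈ roots T ↔ (y, 0) ∈ T := fun T => by simp [roots]
      rw [← hmem, ← hmem, hroots]
    | succ i ih =>
      rintro ⟨y, j⟩ (hj : j ≤ i + 1)
      rcases hj.eq_or_lt with rfl | hlt
      · exact ⟨mem_of_childCode_eq hS hS' hcode ih,
          mem_of_childCode_eq hS' hS hcode.symm fun c hc => (ih c hc).symm⟩
      · exact ih (y, j) (by simp only; omega)
  ext c
  exact hlow c.2 c le_rfl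

theorem childCode_subset {S : Finset (V × ℕ)} (hS : IsGrounded r S) {Δ : ℕ}
    (hΔ : ∀ z, #{y | r z y} ≤ Δ) : childCode r S ⊆ range #S ×ˢ range Δ := by
  intro p hp
  obtain ⟨⟨y, i⟩, ha, rfl⟩ := mem_image.1 hp
  obtain ⟨hyS, hi⟩ := mem_filter.1 ha
  obtain ⟨i, rfl⟩ := Nat.exists_eq_add_one_of_ne_zero hi
  obtain ⟨hzS, hzy⟩ := parent_spec r hS hyS
  simp only [add_tsub_cancel_right, mem_product, mem_range]
  exact ⟨card_filter_lt_lt_card hzS,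
    (card_filter_lt_lt_card (f := id) (by simpa using hzy)).trans_le (hΔ _)⟩

theorem card_childCode_le (S : Finset (V × ℕ)) : #(childCode r S) ≤ #S :=
  card_image_le.trans (card_filter_le _ _)

end Encoding

theorem card_filter_powerset_le_sum_choose {α : Type*} (X : Finset α) (m : ℕ) :
    #{C ∈ X.powerset | #C ≤ m} ≤ ∑ j ∈ range (m + 1), (#X).choose j := by
  calc #{C ∈ X.powerset | #C ≤ m} ≤ #((range (m + 1)).biUnion fun j => X.powersetCard j) := by
        refine card_le_card fun C hC => ?_
        obtain ⟨hCX, hCm⟩ := mem_filter.1 hC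
        exact mem_biUnion.2 ⟨#C, mem_range.2 (by omega),
          mem_powersetCard.2 ⟨mem_powerset.1 hCX, rfl⟩⟩
    _ ≤ ∑ j ∈ range (m + 1), (#X).choose j := by
        simpa only [card_powersetCard] using
          card_biUnion_le (s := range (m + 1)) (t := fun j => X.powersetCard j)

theorem card_groundedSets_le [Fintype V] {r : V → V → Prop} {Δ : ℕ}
    (hΔ : ∀ z, #{y | r z y} ≤ Δ) (m : ℕ) :
    #(groundedSets r m) ≤ 2 ^ Fintype.card V * ∑ j ∈ range (m + 1), (m * Δ).choose j := by
  let : LinearOrder V := LinearOrder.lift' _ (Fintype.equivFin V).injective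
  have hmaps : ∀ S ∈ groundedSets r m, (roots S, childCode r S)
      ∈ univ.powerset ×ˢ {C ∈ (range m ×ˢ range Δ).powerset | #C ≤ m} := by
    intro S hS
    obtain ⟨hcard, hgr⟩ := (mem_groundedSets r).1 hS
    simp only [mem_product, mem_powerset, subset_univ, true_and, mem_filter]
    exact ⟨hcard ▸ childCode_subset hgr hΔ, hcard ▸ card_childCode_le S⟩
  have hinj : Set.InjOn (fun S => (roots S, childCode r S)) (groundedSets r m) := by
    intro S hS S' hS' h
    simp only [Prod.mk.injEq] at h
    exact eq_of_roots_eq_of_childCode_eq ((mem_groundedSets r).1 hS).2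
      ((mem_groundedSets r).1 hS').2 h.1 h.2
  calc #(groundedSets r m)
      ≤ #(univ.powerset ×ˢ {C ∈ (range m ×ˢ range Δ).powerset | #C ≤ m}) :=
        card_le_card_of_injOn _ hmaps hinj
    _ ≤ 2 ^ Fintype.card V * ∑ j ∈ range (m + 1), (m * Δ).choose j := by
        rw [card_product, card_powerset, card_univ]
        gcongr
        simpa using card_filter_powerset_le_sum_choose (range m ×ˢ range Δ) m

theorem sum_range_choose_mul_le_exp_mul_pow {m Δ : ℕ} (hΔ : 1 ≤ Δ) :
    ∑ j ∈ range (m + 1), ((m * Δ).choose j : ℝ) ≤ (Real.exp 1 * Δ) ^ m := by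
  calc ∑ j ∈ range (m + 1), ((m * Δ).choose j : ℝ)
      ≤ ∑ j ∈ range (m + 1), (Δ : ℝ) ^ m * ((m : ℝ) ^ j / j.factorial) := by
        refine sum_le_sum fun j hj => ?_
        have hΔj : (Δ : ℝ) ^ j ≤ (Δ : ℝ) ^ m :=
          pow_le_pow_right₀ (by exact_mod_cast hΔ) (Nat.lt_succ_iff.1 (mem_range.1 hj))
        calc ((m * Δ).choose j : ℝ) ≤ ((m * Δ : ℕ) : ℝ) ^ j / j.factorial :=
              Nat.choose_le_pow_div j (m * Δ)
          _ = (Δ : ℝ) ^ j * ((m : ℝ) ^ j / j.factorial) := by push_cast; ring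
          _ ≤ (Δ : ℝ) ^ m * ((m : ℝ) ^ j / j.factorial) := by gcongr
    _ ≤ (Δ : ℝ) ^ m * Real.exp m := by
        rw [← mul_sum]
        gcongr
        exact Real.sum_le_exp_of_nonneg (Nat.cast_nonneg m) (m + 1)
    _ = (Real.exp 1 * Δ) ^ m := by rw [← Real.exp_one_pow, mul_pow, mul_comm]

theorem card_filter_le_maxdeg [Fintype V] (r : V → V → Prop) (z : V) :
    (#{y | r z y} : ℕ∞) ≤ maxdeg r := by
  calc (#{y | r z y} : ℕ∞) = (Var r z).encard := by
        rw [← Set.encard_coe_eq_coe_finsetCard]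
        simp [Var]
    _ ≤ (Nbr r z).encard := Set.encard_le_encard Set.subset_union_left
    _ ≤ maxdeg r := le_iSup (fun x => (Nbr r x).encard) z

theorem card_groundedSets_le_exp_mul_pow [Fintype V] {r : V → V → Prop} {Δ : ℕ}
    (hΔ1 : 1 ≤ Δ) (hΔ : maxdeg r ≤ Δ) (m : ℕ) :
    (#(groundedSets r m) : ℝ) ≤ 2 ^ Fintype.card V * (Real.exp 1 * Δ) ^ m := by
  have hdeg : ∀ z, #{y | r z y} ≤ Δ := fun z => by
    exact_mod_cast (card_filter_le_maxdeg r z).trans hΔ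
  calc (#(groundedSets r m) : ℝ)
      ≤ 2 ^ Fintype.card V * ∑ j ∈ range (m + 1), ((m * Δ).choose j : ℝ) := by
        exact_mod_cast card_groundedSets_le hdeg m
    _ ≤ 2 ^ Fintype.card V * (Real.exp 1 * Δ) ^ m := by
        gcongr
        exact sum_range_choose_mul_le_exp_mul_pow hΔ1

theorem exists_of_maxdeg_ne_zero {r : V → V → Prop} (h : maxdeg r ≠ 0) :
    ∃ x y, r x y := by
  by_contra! hr
  refine h (ENat.iSup_eq_zero.2 fun x => Set.encard_eq_zero.2 ?_)
  exact Set.eq_empty_of_forall_notMem fun y hy => hy.elim (hr x y) (hr y x)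

theorem one_le_mul_natCard [Finite V] {E : V → V → Prop} {d : ℕ}
    (hd : IsGreatest {j : ℕ | ∃ x : V, j = (Var E x).ncard} d) (hE : maxdeg (Rel E) ≠ 0) :
    1 ≤ d * Nat.card V := by
  obtain ⟨x, -, y, hy, -⟩ := exists_of_maxdeg_ne_zero hE
  have hx : 1 ≤ (Var E x).ncard := (Set.ncard_pos (Set.toFinite _)).2 ⟨y, hy⟩
  have hd1 : 1 ≤ d := hx.trans (hd.2 ⟨x, rfl⟩)
  have : Nonempty V := ⟨x⟩
  exact Nat.one_le_iff_ne_zero.2 (Nat.mul_ne_zero (by omega) Nat.card_pos.ne')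

theorem natCast_mul_one_div_pow_le_ofReal {N b n : ℕ} (hb : 0 < b) {p : ℝ}
    (h : (N : ℝ) / (b : ℝ) ^ n ≤ p) : (N : ℝ≥0∞) * (1 / (b : ℝ≥0∞)) ^ n ≤ ENNReal.ofReal p := by
  calc (N : ℝ≥0∞) * (1 / (b : ℝ≥0∞)) ^ n = ENNReal.ofReal ((N : ℝ) / (b : ℝ) ^ n) := by
        rw [ENNReal.ofReal_div_of_pos (by positivity), ENNReal.ofReal_natCast,
          ENNReal.ofReal_pow (Nat.cast_nonneg b), ENNReal.ofReal_natCast, one_div,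
          ← ENNReal.inv_pow, div_eq_mul_inv]
    _ ≤ ENNReal.ofReal p := ENNReal.ofReal_le_ofReal h

section Landscape

variable [Fintype V] (E : V → V → Prop) {b : ℕ} (R : LocalRule E b)
  (I : Set V → Set V)

theorem runVerts_finite (k : ℕ) (rnd : V × ℕ → Fin b) : (runVerts E R I k rnd).Finite :=
  (Set.finite_univ.prod (Set.finite_Iio k)).subset fun _ ha => ⟨Set.mem_univ _, ha.1⟩

theorem measure_ncard_runVerts_eq_le {μ : Measure ((V × ℕ) → Fin b)} (hμ : IsUnifProduct b μ)
    (hI : IndepFun (Rel E) I) {q : ℝ≥0∞}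
    (hq : ∀ x, (Nat.card (R.Rc x) : ℝ≥0∞) * (1 / (b : ℝ≥0∞)) ^ (Var E x).ncard ≤ q)
    (k m : ℕ) :
    μ {rnd | (runVerts E R I k rnd).ncard = m} ≤ #(groundedSets (Rel E) m) * q ^ m := by
  have hcover : {rnd | (runVerts E R I k rnd).ncard = m}
      ⊆ ⋃ S ∈ groundedSets (Rel E) m, {rnd | runVerts E R I k rnd = S} := by
    intro rnd hrnd
    have hfin := runVerts_finite E R I k rnd
    refine Set.mem_biUnion ((mem_groundedSets _).2 ⟨?_, fun y i hy => ?_⟩) hfin.coe_toFinset.symm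
    · rw [← Set.ncard_eq_toFinset_card _ hfin]
      exact hrnd
    · simpa using exists_rel_of_mem_runVerts E R I hI (hfin.mem_toFinset.1 hy)
  calc μ {rnd | (runVerts E R I k rnd).ncard = m}
      ≤ ∑ S ∈ groundedSets (Rel E) m, μ {rnd | runVerts E R I k rnd = S} :=
        (measure_mono hcover).trans (measure_biUnion_finset_le _ _)
    _ ≤ ∑ S ∈ groundedSets (Rel E) m, q ^ m := by
        refine sum_le_sum fun S hS => (measure_runVerts_eq_le E R I hμ hI k S).trans ?_
        rw [← ((mem_groundedSets _).1 hS).1, ← prod_const]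
        exact prod_le_prod' fun a _ => hq a.1
    _ = #(groundedSets (Rel E) m) * q ^ m := by rw [sum_const, nsmul_eq_mul]

end Landscape

theorem two_pow_mul_pow_mul_le {n m d : ℕ} {c δ : ℝ} (hc : 0 < c) (hm : 1 ≤ m)
    (hdn : 1 ≤ (d : ℝ) * n) :
    2 ^ n * c ^ m * (1 / c ^ (1 + δ)) ^ m ≤ d * n * ((m : ℝ) + 1) ^ n / c ^ (δ * m) := by
  have hpow : c ^ m * (1 / c ^ (1 + δ)) ^ m = 1 / c ^ (δ * m) := by
    have hbase : c * (1 / c ^ (1 + δ)) = c ^ (-δ) := by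
      rw [Real.rpow_add hc, Real.rpow_one, Real.rpow_neg hc.le]
      field_simp
    rw [← mul_pow, hbase, ← Real.rpow_mul_natCast hc.le, neg_mul, Real.rpow_neg hc.le, one_div]
  have htwo : (2 : ℝ) ^ n ≤ d * n * ((m : ℝ) + 1) ^ n := by
    calc (2 : ℝ) ^ n ≤ ((m : ℝ) + 1) ^ n := by
          gcongr
          have : (1 : ℝ) ≤ m := by exact_mod_cast hm
          linarith
      _ ≤ d * n * ((m : ℝ) + 1) ^ n := le_mul_of_one_le_left (by positivity) hdn
  rw [mul_assoc, hpow, mul_one_div]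
  gcongr

end MTLLL

open MTLLL in
theorem classical_mt_landscape_bound_general
    {V : Type*} [Fintype V] (E : V → V → Prop)
    (b : ℕ) (hb : 1 < b) (R : LocalRule E b)
    (Δ : ℕ) (hΔ : maxdeg (Rel E) = (Δ : ℕ∞)) (hΔ1 : 1 ≤ Δ)
    (d : ℕ) (hd : IsGreatest {j : ℕ | ∃ x : V, j = (Var E x).ncard} d)
    (δ : ℝ)
    (hmain : ∀ x : V, (Nat.card (R.Rc x) : ℝ) / (b : ℝ) ^ (Var E x).ncard
      ≤ 1 / (Real.exp 1 * Δ) ^ ((1 : ℝ) + δ))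
    (I : Set V → Set V) (hI : IndepFun (Rel E) I) (lo : LinearOrder V)
    (μ : MeasureTheory.Measure ((V × ℕ) → Fin b)) (hμ : IsUnifProduct b μ)
    (m k : ℕ) :
    μ {rnd | ((runLandscape E R (id : V → V) hI rnd lo k).F.verts.ncard) = m}
      ≤ ENNReal.ofReal ((d : ℝ) * (Nat.card V : ℝ) * (m + 1 : ℝ) ^ (Nat.card V)
          / (Real.exp 1 * Δ) ^ (δ * (m : ℝ))) := by
  have hdn : (1 : ℝ) ≤ d * Nat.card V := by
    exact_mod_cast one_le_mul_natCard hd (by rw [hΔ]; exact_mod_cast (by omega : Δ ≠ 0))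
  change μ {rnd | (runVerts E R I k rnd).ncard = m} ≤ _
  rcases Nat.eq_zero_or_pos m with rfl | hm
  · have := hμ.1
    exact prob_le_one.trans (ENNReal.one_le_ofReal.2 (by simpa using hdn))
  set p := 1 / (Real.exp 1 * Δ) ^ ((1 : ℝ) + δ)
  calc μ {rnd | (runVerts E R I k rnd).ncard = m}
      ≤ (groundedSets (Rel E) m).card * ENNReal.ofReal p ^ m :=
        measure_ncard_runVerts_eq_le E R I hμ hI
          (fun x => natCast_mul_one_div_pow_le_ofReal (by omega) (hmain x)) k m
    _ = ENNReal.ofReal ((groundedSets (Rel E) m).card * p ^ m) := by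
        rw [ENNReal.ofReal_mul (Nat.cast_nonneg _), ENNReal.ofReal_natCast,
          ENNReal.ofReal_pow (by positivity)]
    _ ≤ _ := by
        refine ENNReal.ofReal_le_ofReal ((mul_le_mul_of_nonneg_right
          (card_groundedSets_le_exp_mul_pow hΔ1 hΔ.le m) (by positivity)).trans ?_)
        rw [Fintype.card_eq_nat_card]
        exact two_pow_mul_pow_mul_le (by positivity) hm hdn

open MTLLL in
/-- Theorem 3.7 (analysis of the classical Moser–Tardos algorithm): for a finite digraph
with the singleton partition (encoded here by `part = id`), under the condition
`max_x |𝐑ᶜ(x)|/b^{|Var(x)|} ≤ (eΔ)^{-(1+δ)}`, the probability that the run landscape after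
`k` steps has exactly `m` vertices is at most `d·|V|·(m+1)^{|V|}/(eΔ)^{δm}`. -/
theorem classical_mt_landscape_bound
    {V : Type*} [Nonempty V] [Fintype V] (E : V → V → Prop)
    (b : ℕ) (hb : 1 < b) (R : LocalRule E b)
    (Δ : ℕ) (hΔ : maxdeg (Rel E) = (Δ : ℕ∞)) (hΔ1 : 1 ≤ Δ)
    (d : ℕ) (hd : IsGreatest {j : ℕ | ∃ x : V, j = (Var E x).ncard} d)
    (δ : ℝ) (hδ : 0 < δ)
    (hmain : ∀ x : V, (Nat.card (R.Rc x) : ℝ) / (b : ℝ) ^ (Var E x).ncard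
      ≤ 1 / (Real.exp 1 * Δ) ^ ((1 : ℝ) + δ))
    (I : Set V → Set V) (hI : IndepFun (Rel E) I) (lo : LinearOrder V)
    (μ : MeasureTheory.Measure ((V × ℕ) → Fin b)) (hμ : IsUnifProduct b μ)
    (m k : ℕ) :
    μ {rnd | ((runLandscape E R (id : V → V) hI rnd lo k).F.verts.ncard) = m}
      ≤ ENNReal.ofReal ((d : ℝ) * (Nat.card V : ℝ) * (m + 1 : ℝ) ^ (Nat.card V)
          / (Real.exp 1 * Δ) ^ (δ * (m : ℝ))) :=
  classical_mt_landscape_bound_general E b hb R Δ hΔ hΔ1 d hd δ hmain I hI lo μ hμ m k
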